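/- arXiv:1908.03570 — 4 statements merged into one kernel-verified Lean document; each statement's English description precedes it below -/
import Mathlib

section
/- Let D ⊆ ℝ be an open interval and h : D → ℝ continuous. Suppose there is a nonempty open neighborhood V of a point x₀ ∈ D such that for every x ∈ V and every ξ > 0 with (x-ξ, x+ξ) ⊆ D one has h(x-ξ) + h(x+ξ) = 0. Then for every R > 0 with [x₀-R, x₀+R] ⊆ D, h vanishes identically on [x₀-R, x₀+R]. -/
set_option autoImplicit false

/-- One-dimensional vanishing lemma: if the two-point means of a continuous
function `h` vanish around every point of a neighborhood `V` of `x₀`, then `h`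
vanishes on every closed interval `[x₀ - R, x₀ + R]` contained in `D`. -/
theorem stmt0 (a b : ℝ) (D : Set ℝ) (hD : D = Set.Ioo a b)
    (h : ℝ → ℝ) (hcont : ContinuousOn h D)
    (x₀ : ℝ) (hx₀D : x₀ ∈ D)
    (V : Set ℝ) (hVopen : IsOpen V) (hVne : V.Nonempty) (hx₀V : x₀ ∈ V) (hVD : V ⊆ D)
    (hmean : ∀ x ∈ V, ∀ ξ : ℝ, 0 < ξ → Set.Ioo (x - ξ) (x + ξ) ⊆ D →
      h (x - ξ) + h (x + ξ) = 0) :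
    ∀ R : ℝ, 0 < R → Set.Icc (x₀ - R) (x₀ + R) ⊆ D →
      ∀ y ∈ Set.Icc (x₀ - R) (x₀ + R), h y = 0 := by
  intro R hR hIcc
  obtain ⟨ε, hε, hball⟩ := Metric.isOpen_iff.mp hVopen x₀ hx₀V
  have hVmem : ∀ c : ℝ, |c - x₀| < ε → c ∈ V := fun c hc =>
    hball (by simpa [Real.dist_eq] using hc)
  -- two-point mean vanishing, ordered version
  have M0 : ∀ u v : ℝ, u ∈ Set.Icc (x₀ - R) (x₀ + R) → v ∈ Set.Icc (x₀ - R) (x₀ + R) →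
      u < v → (u + v) / 2 ∈ V → h u + h v = 0 := by
    intro u v hu hv huv hmid
    obtain ⟨hu1, hu2⟩ := hu
    obtain ⟨hv1, hv2⟩ := hv
    have hsub : Set.Ioo ((u + v) / 2 - (v - u) / 2) ((u + v) / 2 + (v - u) / 2) ⊆ D := by
      intro z hz
      obtain ⟨hz1, hz2⟩ := hz
      exact hIcc ⟨by linarith, by linarith⟩
    have key := hmean _ hmid ((v - u) / 2) (by linarith) hsub
    have e1 : (u + v) / 2 - (v - u) / 2 = u := by ring
    have e2 : (u + v) / 2 + (v - u) / 2 = v := by ring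
    rwa [e1, e2] at key
  -- symmetric version
  have M : ∀ u v : ℝ, u ∈ Set.Icc (x₀ - R) (x₀ + R) → v ∈ Set.Icc (x₀ - R) (x₀ + R) →
      u ≠ v → (u + v) / 2 ∈ V → h u + h v = 0 := by
    intro u v hu hv hne hmid
    rcases lt_or_gt_of_ne hne with hlt | hgt
    · exact M0 u v hu hv hlt hmid
    · have := M0 v u hv hu hgt (by rwa [add_comm])
      linarith
  -- translation invariance for small steps
  have T : ∀ s t : ℝ, 0 < s → s < ε → t ∈ Set.Icc (x₀ - R) (x₀ + R) →
      t + s ∈ Set.Icc (x₀ - R) (x₀ + R) → h (t + s) = h t := by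
    intro s t hs hsε ht hts
    obtain ⟨ht1, ht2⟩ := ht
    obtain ⟨hts1, hts2⟩ := hts
    by_cases hcase : t = x₀ - s / 4 ∨ t = x₀ - 3 * s / 4
    · -- route 1: reflect about x₀, then about x₀ + s/2
      have hne0 : t ≠ x₀ := by
        rcases hcase with hc | hc <;> rw [hc] <;> intro hh <;> linarith
      have hne2 : t ≠ x₀ - s / 2 := by
        rcases hcase with hc | hc <;> rw [hc] <;> intro hh <;> linarith
      have huI : (2 * x₀ - t) ∈ Set.Icc (x₀ - R) (x₀ + R) :=
        ⟨by linarith, by linarith⟩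
      have e1 : (t + (2 * x₀ - t)) / 2 = x₀ := by ring
      have h1 : h t + h (2 * x₀ - t) = 0 := by
        apply M t (2 * x₀ - t) ⟨ht1, ht2⟩ huI
        · intro hh; apply hne0; linarith
        · rw [e1]; exact hx₀V
      have h2 : h (2 * x₀ - t) + h (t + s) = 0 := by
        apply M (2 * x₀ - t) (t + s) huI ⟨hts1, hts2⟩
        · intro hh; apply hne2; linarith
        · apply hVmem
          have e2 : (2 * x₀ - t + (t + s)) / 2 - x₀ = s / 2 := by ring
          rw [e2, abs_of_pos (by linarith)]; linarith
      linarith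
    · -- route 3: reflect about x₀ - s/4, then about x₀ + s/4
      push_neg at hcase
      obtain ⟨hne1, hne3⟩ := hcase
      have huI : (2 * x₀ - s / 2 - t) ∈ Set.Icc (x₀ - R) (x₀ + R) :=
        ⟨by linarith, by linarith⟩
      have h1 : h t + h (2 * x₀ - s / 2 - t) = 0 := by
        apply M t (2 * x₀ - s / 2 - t) ⟨ht1, ht2⟩ huI
        · intro hh; apply hne1; linarith
        · apply hVmem
          have e1 : (t + (2 * x₀ - s / 2 - t)) / 2 - x₀ = -(s / 4) := by ring
          rw [e1, abs_neg, abs_of_pos (by linarith)]; linarith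
      have h2 : h (2 * x₀ - s / 2 - t) + h (t + s) = 0 := by
        apply M (2 * x₀ - s / 2 - t) (t + s) huI ⟨hts1, hts2⟩
        · intro hh; apply hne3; linarith
        · apply hVmem
          have e2 : (2 * x₀ - s / 2 - t + (t + s)) / 2 - x₀ = s / 4 := by ring
          rw [e2, abs_of_pos (by linarith)]; linarith
      linarith
  -- chaining: h is constant on the interval
  have key : ∀ n : ℕ, ∀ t t' : ℝ, t ∈ Set.Icc (x₀ - R) (x₀ + R) →
      t' ∈ Set.Icc (x₀ - R) (x₀ + R) → t ≤ t' → t' - t ≤ n * (ε / 2) → h t = h t' := by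
    intro n
    induction n with
    | zero =>
      intro t t' ht ht' hle hb
      norm_num at hb
      have : t = t' := by linarith
      rw [this]
    | succ n ih =>
      intro t t' ht ht' hle hb
      rcases eq_or_lt_of_le hle with heq | hlt
      · rw [heq]
      · by_cases hsmall : t' - t ≤ ε / 2
        · have hT := T (t' - t) t (by linarith) (by linarith) ht
            (by rw [show t + (t' - t) = t' by ring]; exact ht')
          rw [show t + (t' - t) = t' by ring] at hT
          exact hT.symm
        · push_neg at hsmall
          have ht''I : t' - ε / 2 ∈ Set.Icc (x₀ - R) (x₀ + R) :=
            ⟨by have := ht.1; linarith, by have := ht'.2; linarith⟩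
          have h1 := T (ε / 2) (t' - ε / 2) (by linarith) (by linarith) ht''I
            (by rw [show t' - ε / 2 + ε / 2 = t' by ring]; exact ht')
          rw [show t' - ε / 2 + ε / 2 = t' by ring] at h1
          have h2 := ih t (t' - ε / 2) ht ht''I (by linarith)
            (by push_cast at hb ⊢; linarith)
          rw [h2, h1]
  have hconst : ∀ t ∈ Set.Icc (x₀ - R) (x₀ + R), ∀ t' ∈ Set.Icc (x₀ - R) (x₀ + R),
      h t = h t' := by
    have hstep : ∀ t t' : ℝ, t ∈ Set.Icc (x₀ - R) (x₀ + R) →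
        t' ∈ Set.Icc (x₀ - R) (x₀ + R) → t ≤ t' → h t = h t' := by
      intro t t' ht ht' hle
      obtain ⟨n, hn⟩ := exists_nat_ge ((t' - t) / (ε / 2))
      apply key n t t' ht ht' hle
      rw [div_le_iff₀ (by linarith)] at hn
      linarith
    intro t ht t' ht'
    rcases le_total t t' with hle | hle
    · exact hstep t t' ht ht' hle
    · exact (hstep t' t ht' ht hle).symm
  -- the constant is zero
  have haI : x₀ - R / 2 ∈ Set.Icc (x₀ - R) (x₀ + R) := ⟨by linarith, by linarith⟩
  have hbI : x₀ + R / 2 ∈ Set.Icc (x₀ - R) (x₀ + R) := ⟨by linarith, by linarith⟩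
  have hzero : h (x₀ - R / 2) + h (x₀ + R / 2) = 0 := by
    apply M _ _ haI hbI
    · intro hh; linarith
    · rw [show (x₀ - R / 2 + (x₀ + R / 2)) / 2 = x₀ by ring]; exact hx₀V
  have heq := hconst _ haI _ hbI
  intro y hy
  have h1 := hconst y hy _ haI
  linarith
end

section
/- Let D ⊆ ℝ^N (N ≥ 2) be open, h : D → ℝ continuous, and suppose that for all x in a neighborhood V of x₀ and all admissible radii R the spherical mean of h over ∂B_R(x) vanishes. Then for every polynomial P : ℝ^N → ℝ, the spherical mean ∫_{∂B₁(0)} h(x + Rξ) P(x + Rξ) dσ(ξ) = 0 for all x ∈ V and all R > 0 with B̄_R(x) ⊆ D. -/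
/-!
Write `S f x r` for `sphereIntegral μ f x r`. By induction on the polynomial it suffices to show
that if `S g v r` vanishes for all centres `v` near `x`, then so does `S (y ↦ g y ⟪y, w⟫) x r`.
As `⟪y, w⟫ = ⟪y - x, w⟫ + ⟪x, w⟫`, this amounts to the vanishing of
`A(r) = S (y ↦ g y ⟪y - x, w⟫) x r`, up to a factor the flux of `g` through the sphere, i.e. the
derivative in the centre of the integral of `g` over the ball. To differentiate without any
regularity of `g`, replace the indicator of the ball by the radial profile `φ(z) = χ(‖z‖²)` with
`χ(u) = ∫ᵤ^{ρ²} ψ`. In polar coordinates `g ⋆ φ` vanishes near `x`, so its derivative `g ⋆ ∂_w φ`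
vanishes at `x`; in polar coordinates again this says `∫₀^∞ r^(n-1) ψ(r²) A(r) dr = 0`. As `ψ` is
an arbitrary continuous function vanishing on `[ρ², ∞)`, the continuous function `A` vanishes
on `(0, ρ)`.
-/

open MeasureTheory Set Metric Filter Module
open scoped Topology RealInnerProductSpace Convolution

theorem ContinuousOn.exists_continuous_hasCompactSupport_eqOn {X : Type*} [TopologicalSpace X]
    [T2Space X] [NormalSpace X] [LocallyCompactSpace X] {K : Set X} (hK : IsCompact K)
    {f : X → ℝ} (hf : ContinuousOn f K) :
    ∃ F : X → ℝ, Continuous F ∧ HasCompactSupport F ∧ EqOn F f K := by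
  obtain ⟨G, hG⟩ := ContinuousMap.exists_restrict_eq hK.isClosed ⟨K.domRestrict f, hf.domRestrict⟩
  obtain ⟨c, hc1, -, hcc, -⟩ := exists_continuous_one_zero_of_isCompact hK isClosed_empty
    (disjoint_empty K)
  refine ⟨fun y => c y * G y, by fun_prop, hcc.mul_right, fun y hy => ?_⟩
  have hGy : G y = f y := congr($hG ⟨y, hy⟩)
  simp [hc1 hy, hGy]

theorem hasDerivAt_intervalIntegral_left {ψ : ℝ → ℝ} (hψ : Continuous ψ) (c u : ℝ) :
    HasDerivAt (fun u => ∫ s in u..c, ψ s) (-ψ u) u :=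
  intervalIntegral.integral_hasDerivAt_left (hψ.intervalIntegrable _ _)
    (hψ.stronglyMeasurableAtFilter _ _) hψ.continuousAt

theorem contDiff_intervalIntegral_left {ψ : ℝ → ℝ} (hψ : Continuous ψ) (c : ℝ) :
    ContDiff ℝ 1 (fun u => ∫ s in u..c, ψ s) := by
  rw [contDiff_one_iff_deriv]
  refine ⟨fun u => (hasDerivAt_intervalIntegral_left hψ c u).differentiableAt, ?_⟩
  have hderiv : deriv (fun u => ∫ s in u..c, ψ s) = -ψ :=
    funext fun u => (hasDerivAt_intervalIntegral_left hψ c u).deriv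
  exact hderiv ▸ hψ.neg

theorem intervalIntegral_eq_zero_of_forall_ge_eq_zero {ψ : ℝ → ℝ} {c u : ℝ}
    (hψc : ∀ s, c ≤ s → ψ s = 0) (hcu : c ≤ u) : ∫ s in u..c, ψ s = 0 := by
  rw [intervalIntegral.integral_congr (g := 0) fun s hs => hψc s (uIcc_of_ge hcu ▸ hs).1]
  simp

theorem hasCompactSupport_intervalIntegral_norm_sq {F : Type*} [NormedAddCommGroup F]
    [ProperSpace F] {ψ : ℝ → ℝ} {c : ℝ} (hψc : ∀ u, c ≤ u → ψ u = 0) :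
    HasCompactSupport (fun z : F => ∫ s in ‖z‖ ^ 2..c, ψ s) := by
  refine HasCompactSupport.intro (isCompact_closedBall (0 : F) (|c| + 1)) fun z hz => ?_
  have hz : |c| + 1 < ‖z‖ := by simpa using hz
  exact intervalIntegral_eq_zero_of_forall_ge_eq_zero hψc
    (by nlinarith [le_abs_self c, abs_nonneg c])

theorem eqOn_zero_of_integral_Ioi_mul_comp_sq_eq_zero {f : ℝ → ℝ} (hf : Continuous f) {ρ : ℝ}
    (h : ∀ ψ : ℝ → ℝ, Continuous ψ → (∀ u, ρ ^ 2 ≤ u → ψ u = 0) →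
      ∫ r in Ioi 0, f r * ψ (r ^ 2) = 0) :
    EqOn f 0 (Ioo 0 ρ) := by
  have hae : ∀ᵐ r, r ∈ Ioo 0 ρ → f r = 0 := by
    refine isOpen_Ioo.ae_eq_zero_of_integral_contDiff_smul_eq_zero
      (hf.locallyIntegrable.locallyIntegrableOn _) fun g hg _ hgU => ?_
    have hg0 : ∀ r ∉ Ioo 0 ρ, g r = 0 := fun r hr =>
      image_eq_zero_of_notMem_tsupport fun hr' => hr (hgU hr')
    have hsqrt : ∀ u, ρ ^ 2 ≤ u → g (Real.sqrt u) = 0 := fun u hu =>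
      hg0 _ fun hmem => hmem.2.not_ge <| (le_abs_self ρ).trans <| by
        simpa [Real.sqrt_sq_eq_abs] using Real.sqrt_le_sqrt hu
    have := h (g ∘ Real.sqrt) (hg.continuous.comp Real.continuous_sqrt) hsqrt
    rw [setIntegral_congr_fun measurableSet_Ioi (g := fun r => g r • f r)
      fun r (hr : 0 < r) => by simp [Real.sqrt_sq hr.le, mul_comm]] at this
    rw [← this, setIntegral_eq_integral_of_forall_compl_eq_zero]
    intro r hr
    rw [hg0 r fun hmem => hr hmem.1, zero_smul]
  exact Measure.eqOn_open_of_ae_eq ((ae_restrict_iff' measurableSet_Ioo).2 hae) isOpen_Ioo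
    hf.continuousOn continuousOn_const

theorem convolution_fderiv_apply_eq_zero_of_eventuallyEq_zero {G : Type*} [NormedAddCommGroup G]
    [NormedSpace ℝ G] [MeasurableSpace G] [BorelSpace G] {ν : Measure G} [SFinite ν]
    [ν.IsAddLeftInvariant] {H φ : G → ℝ} (hH : LocallyIntegrable H ν) (hφ : ContDiff ℝ 1 φ)
    (hφc : HasCompactSupport φ) {x : G} (hx : (H ⋆[ContinuousLinearMap.lsmul ℝ ℝ, ν] φ) =ᶠ[𝓝 x] 0)
    (w : G) : (H ⋆[ContinuousLinearMap.lsmul ℝ ℝ, ν] fun a => fderiv ℝ φ a w) x = 0 := by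
  have hderiv := hφc.hasFDerivAt_convolution_right (ContinuousLinearMap.lsmul ℝ ℝ) hH hφ x
  have hzero := hderiv.unique ((hasFDerivAt_const 0 x).congr_of_eventuallyEq hx)
  rw [← convolution_precompR_apply _ hH (hφc.fderiv ℝ) (hφ.continuous_fderiv one_ne_zero), hzero]
  rfl

section NormedSpace

variable {E : Type*} [NormedAddCommGroup E] [NormedSpace ℝ E]

theorem norm_smul_coe_sphere {r : ℝ} (hr : 0 ≤ r) (ξ : sphere (0 : E) 1) : ‖r • (ξ : E)‖ = r := by
  rw [norm_smul, norm_eq_of_mem_sphere, mul_one, Real.norm_of_nonneg hr]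

theorem add_smul_mem_sphere {x : E} {r : ℝ} (hr : 0 ≤ r) (ξ : sphere (0 : E) 1) :
    x + r • (ξ : E) ∈ sphere x r := by
  simp [norm_smul_coe_sphere hr]

variable [MeasurableSpace E] (μ : Measure E)

noncomputable def sphereIntegral (f : E → ℝ) (x : E) (r : ℝ) : ℝ :=
  ∫ ξ : sphere (0 : E) 1, f (x + r • (ξ : E)) ∂μ.toSphere

variable {f g : E → ℝ} {x : E} {r : ℝ}

theorem sphereIntegral_congr (hr : 0 ≤ r) (hfg : EqOn f g (sphere x r)) :
    sphereIntegral μ f x r = sphereIntegral μ g x r :=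
  integral_congr_ae (Eventually.of_forall fun ξ => hfg (add_smul_mem_sphere hr ξ))

theorem sphereIntegral_mul_const (c : ℝ) :
    sphereIntegral μ (fun y => f y * c) x r = sphereIntegral μ f x r * c :=
  integral_mul_const c _

def HasVanishingSphereIntegrals (D V : Set E) (f : E → ℝ) : Prop :=
  ContinuousOn f D ∧ ∀ x ∈ V, ∀ R, 0 < R → closedBall x R ⊆ D → sphereIntegral μ f x R = 0

namespace HasVanishingSphereIntegrals

variable {μ} {D V : Set E}

theorem mul_const (hf : HasVanishingSphereIntegrals μ D V f) (c : ℝ) :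
    HasVanishingSphereIntegrals μ D V (fun y => f y * c) :=
  ⟨hf.1.mul continuousOn_const, fun x hx R hR hRD => by
    rw [sphereIntegral_mul_const, hf.2 x hx R hR hRD, zero_mul]⟩

end HasVanishingSphereIntegrals

variable [FiniteDimensional ℝ E] [BorelSpace E] [μ.IsAddHaarMeasure]

theorem integrable_sphere_comp_add_smul (hr : 0 ≤ r) (hf : ContinuousOn f (sphere x r)) :
    Integrable (fun ξ : sphere (0 : E) 1 => f (x + r • (ξ : E))) μ.toSphere :=
  (hf.comp_continuous (by fun_prop) (add_smul_mem_sphere hr)).integrable_of_hasCompactSupport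
    (.of_compactSpace _)

theorem sphereIntegral_add (hr : 0 ≤ r) (hf : ContinuousOn f (sphere x r))
    (hg : ContinuousOn g (sphere x r)) :
    sphereIntegral μ (fun y => f y + g y) x r = sphereIntegral μ f x r + sphereIntegral μ g x r :=
  integral_add (integrable_sphere_comp_add_smul μ hr hf) (integrable_sphere_comp_add_smul μ hr hg)

namespace HasVanishingSphereIntegrals

variable {μ} {D V : Set E}

theorem add (hf : HasVanishingSphereIntegrals μ D V f) (hg : HasVanishingSphereIntegrals μ D V g) :
    HasVanishingSphereIntegrals μ D V (fun y => f y + g y) := by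
  refine ⟨hf.1.add hg.1, fun x hx R hR hRD => ?_⟩
  have hS : sphere x R ⊆ D := sphere_subset_closedBall.trans hRD
  rw [sphereIntegral_add μ hR.le (hf.1.mono hS) (hg.1.mono hS), hf.2 x hx R hR hRD,
    hg.2 x hx R hR hRD, add_zero]

end HasVanishingSphereIntegrals

variable [Nontrivial E]

theorem integral_eq_integral_Ioi_pow_mul_integral_sphere {g : E → ℝ} (hg : Integrable g μ) :
    ∫ y, g y ∂μ = ∫ r in Ioi (0 : ℝ), r ^ (finrank ℝ E - 1) *
      ∫ ξ : sphere (0 : E) 1, g (r • (ξ : E)) ∂μ.toSphere := by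
  have hpres := μ.measurePreserving_homeomorphUnitSphereProd
  have hpolar : ∀ y : ({(0 : E)}ᶜ : Set E), ‖(y : E)‖ • ‖(y : E)‖⁻¹ • (y : E) = y := fun y =>
    smul_inv_smul₀ (norm_ne_zero_iff.2 y.2) _
  have hint : Integrable (fun p : sphere (0 : E) 1 × Ioi (0 : ℝ) => g ((p.2 : ℝ) • (p.1 : E)))
      (μ.toSphere.prod (.volumeIoiPow (finrank ℝ E - 1))) := by
    rw [← hpres.integrable_comp_emb (Homeomorph.measurableEmbedding _)]
    simpa [Function.comp_def, hpolar] using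
      (integrableOn_iff_comap_subtypeVal (measurableSet_singleton (0 : E)).compl).1 hg.integrableOn
  calc ∫ y, g y ∂μ
      = ∫ y : ({(0 : E)}ᶜ : Set E), g y ∂(μ.comap (↑)) := by
        rw [integral_subtype_comap (measurableSet_singleton _).compl, restrict_compl_singleton]
    _ = ∫ p : sphere (0 : E) 1 × Ioi (0 : ℝ), g ((p.2 : ℝ) • (p.1 : E))
          ∂(μ.toSphere.prod (.volumeIoiPow (finrank ℝ E - 1))) := by
        rw [← hpres.integral_comp (Homeomorph.measurableEmbedding _)]
        simp [hpolar]
    _ = ∫ r : Ioi (0 : ℝ), ∫ ξ : sphere (0 : E) 1, g ((r : ℝ) • (ξ : E)) ∂μ.toSphere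
          ∂(.volumeIoiPow (finrank ℝ E - 1)) :=
        integral_prod_symm _ hint
    _ = _ := by
        simp only [Measure.volumeIoiPow, ENNReal.ofReal]
        rw [integral_withDensity_eq_integral_smul
            (measurable_subtype_coe.pow_const _).real_toNNReal,
          integral_subtype_comap measurableSet_Ioi fun r : ℝ =>
            Real.toNNReal (r ^ (finrank ℝ E - 1)) •
              ∫ ξ : sphere (0 : E) 1, g (r • (ξ : E)) ∂μ.toSphere]
        refine setIntegral_congr_fun measurableSet_Ioi fun r hr => ?_
        rw [NNReal.smul_def, Real.coe_toNNReal _ (pow_nonneg (le_of_lt hr) _), smul_eq_mul]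

theorem convolution_radial_eq_zero {H : E → ℝ} (hH : Continuous H) (hHc : HasCompactSupport H)
    {χ : ℝ → ℝ} (hχ : Continuous χ) {x : E} {ρ : ℝ}
    (hsph : ∀ r ∈ Ioc 0 ρ, sphereIntegral μ H x r = 0) (hχρ : ∀ r, ρ < r → χ (r ^ 2) = 0) :
    (H ⋆[ContinuousLinearMap.lsmul ℝ ℝ, μ] fun z => χ (‖z‖ ^ 2)) x = 0 := by
  have hint : Integrable (fun y => H (x + y) * χ (‖y‖ ^ 2)) μ :=
    Continuous.integrable_of_hasCompactSupport (by fun_prop)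
      (hHc.comp_homeomorph (Homeomorph.addLeft x)).mul_right
  rw [convolution_def, ← integral_add_left_eq_self _ x]
  simp only [sub_add_cancel_left, norm_neg, ContinuousLinearMap.lsmul_apply, smul_eq_mul]
  rw [integral_eq_integral_Ioi_pow_mul_integral_sphere μ hint]
  refine setIntegral_eq_zero_of_forall_eq_zero fun r (hr : 0 < r) => ?_
  simp only [norm_smul_coe_sphere hr.le, integral_mul_const]
  rcases le_or_gt r ρ with hrρ | hρr
  · rw [show (∫ ξ : sphere (0 : E) 1, H (x + r • (ξ : E)) ∂μ.toSphere) = 0 from hsph r ⟨hr, hrρ⟩]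
    simp
  · simp [hχρ r hρr]

end NormedSpace

section InnerProductSpace

variable {E : Type*} [NormedAddCommGroup E] [InnerProductSpace ℝ E]

theorem hasFDerivAt_intervalIntegral_norm_sq {ψ : ℝ → ℝ} (hψ : Continuous ψ) (c : ℝ) (z : E) :
    HasFDerivAt (fun z : E => ∫ s in ‖z‖ ^ 2..c, ψ s) (-ψ (‖z‖ ^ 2) • 2 • innerSL ℝ z) z :=
  (hasDerivAt_intervalIntegral_left hψ c _).comp_hasFDerivAt z
    (hasStrictFDerivAt_norm_sq z).hasFDerivAt

theorem contDiff_intervalIntegral_norm_sq {ψ : ℝ → ℝ} (hψ : Continuous ψ) (c : ℝ) :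
    ContDiff ℝ 1 (fun z : E => ∫ s in ‖z‖ ^ 2..c, ψ s) :=
  (contDiff_intervalIntegral_left hψ c).comp (contDiff_norm_sq ℝ)

variable [FiniteDimensional ℝ E] [MeasurableSpace E] [BorelSpace E] (μ : Measure E)
  [μ.IsAddHaarMeasure] [Nontrivial E]

theorem integral_Ioi_pow_mul_sphereIntegral_mul_inner_eq_zero {H : E → ℝ} (hH : Continuous H)
    (hHc : HasCompactSupport H) {x : E} {δ ρ : ℝ} (hδ : 0 < δ) (hρ : 0 ≤ ρ)
    (hsph : ∀ v ∈ ball x δ, ∀ r ∈ Ioc 0 ρ, sphereIntegral μ H v r = 0) (w : E)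
    {ψ : ℝ → ℝ} (hψ : Continuous ψ) (hψρ : ∀ u, ρ ^ 2 ≤ u → ψ u = 0) :
    ∫ r in Ioi 0, r ^ (finrank ℝ E - 1) * sphereIntegral μ (fun y => H y * ⟪y - x, w⟫) x r *
      ψ (r ^ 2) = 0 := by
  set φ : E → ℝ := fun z => ∫ s in ‖z‖ ^ 2..ρ ^ 2, ψ s
  have hφ : ∀ v ∈ ball x δ, (H ⋆[ContinuousLinearMap.lsmul ℝ ℝ, μ] φ) v = 0 := fun v hv =>
    convolution_radial_eq_zero μ hH hHc (χ := fun u => ∫ s in u..ρ ^ 2, ψ s)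
      (contDiff_intervalIntegral_left hψ _).continuous
      (hsph v hv) fun r hr => intervalIntegral_eq_zero_of_forall_ge_eq_zero hψρ (by nlinarith)
  have hderiv := convolution_fderiv_apply_eq_zero_of_eventuallyEq_zero hH.locallyIntegrable
    (contDiff_intervalIntegral_norm_sq hψ _) (hasCompactSupport_intervalIntegral_norm_sq hψρ)
    (eventually_of_mem (ball_mem_nhds x hδ) hφ) w
  have hint : Integrable (fun y => H (x + y) * (ψ (‖y‖ ^ 2) * ⟪y, w⟫)) μ :=
    Continuous.integrable_of_hasCompactSupport (by fun_prop)
      (hHc.comp_homeomorph (Homeomorph.addLeft x)).mul_right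
  have hfderiv : ∀ a, fderiv ℝ (fun z : E => ∫ s in ‖z‖ ^ 2..ρ ^ 2, ψ s) a w =
      -ψ (‖a‖ ^ 2) * (2 * ⟪a, w⟫) := fun a => by
    simp [(hasFDerivAt_intervalIntegral_norm_sq hψ _ a).fderiv]
  rw [convolution_def, ← integral_add_left_eq_self _ x] at hderiv
  simp only [sub_add_cancel_left, ContinuousLinearMap.lsmul_apply, smul_eq_mul, hfderiv, norm_neg,
    inner_neg_left] at hderiv
  have hmoment : ∫ y, H (x + y) * (ψ (‖y‖ ^ 2) * ⟪y, w⟫) ∂μ = 0 := by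
    simpa [mul_left_comm _ (2 : ℝ), integral_const_mul] using hderiv
  rw [integral_eq_integral_Ioi_pow_mul_integral_sphere μ hint] at hmoment
  refine Eq.trans ?_ hmoment
  refine setIntegral_congr_fun measurableSet_Ioi fun (r : ℝ) (hr : 0 < r) => ?_
  simp only [sphereIntegral, add_sub_cancel_left, norm_smul_coe_sphere hr.le, mul_assoc,
    ← integral_mul_const]
  congr 2 with ξ
  ring

theorem sphereIntegral_mul_inner_sub_eq_zero {H : E → ℝ} (hH : Continuous H)
    (hHc : HasCompactSupport H) {x : E} {δ ρ : ℝ} (hδ : 0 < δ)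
    (hsph : ∀ v ∈ ball x δ, ∀ r ∈ Ioc 0 ρ, sphereIntegral μ H v r = 0) (w : E) :
    EqOn (sphereIntegral μ (fun y => H y * ⟪y - x, w⟫) x) 0 (Ioo 0 ρ) := by
  intro r hr
  have hA : Continuous (sphereIntegral μ (fun y => H y * ⟪y - x, w⟫) x) := by
    have := continuous_parametric_integral_of_continuous (μ := μ.toSphere)
      (f := fun (r : ℝ) (ξ : sphere (0 : E) 1) => H (x + r • (ξ : E)) * ⟪x + r • (ξ : E) - x, w⟫)
      (by fun_prop) isCompact_univ
    rwa [Measure.restrict_univ] at this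
  have hzero := eqOn_zero_of_integral_Ioi_mul_comp_sq_eq_zero ((continuous_pow _).mul hA)
    (fun ψ hψ hψρ => integral_Ioi_pow_mul_sphereIntegral_mul_inner_eq_zero μ hH hHc hδ
      (hr.1.le.trans hr.2.le) hsph w hψ hψρ) hr
  exact (mul_eq_zero.1 hzero).resolve_left (pow_ne_zero _ hr.1.ne')

namespace HasVanishingSphereIntegrals

variable {μ} {D V : Set E} {f : E → ℝ}

theorem mul_inner (hD : IsOpen D) (hV : IsOpen V)
    (hf : HasVanishingSphereIntegrals μ D V f) (w : E) :
    HasVanishingSphereIntegrals μ D V (fun y => f y * ⟪y, w⟫) := by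
  refine ⟨hf.1.mul (by fun_prop), fun x hx R hR hRD => ?_⟩
  obtain ⟨ε, hε, hεD⟩ := (isCompact_closedBall x R).exists_cthickening_subset_open hD hRD
  rw [cthickening_closedBall hε.le hR.le] at hεD
  obtain ⟨δ, hδ, hδV⟩ := Metric.isOpen_iff.1 hV x hx
  -- The convolution argument needs an integrand that is continuous with compact support on all
  -- of `E`; `H` is such an extension of `f` from a neighbourhood of `closedBall x R`.
  obtain ⟨H, hH, hHc, hHf⟩ := (hf.1.mono hεD).exists_continuous_hasCompactSupport_eqOn
    (isCompact_closedBall x (ε + R))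
  have hsph : ∀ v ∈ ball x (min (ε / 2) δ), ∀ r ∈ Ioc 0 (R + ε / 2),
      sphereIntegral μ H v r = 0 := by
    intro v hv r hr
    have hvr : closedBall v r ⊆ closedBall x (ε + R) :=
      closedBall_subset_closedBall' (by linarith [hr.2, (mem_ball.1 hv).le.trans (min_le_left ..)])
    rw [sphereIntegral_congr μ hr.1.le (hHf.mono (sphere_subset_closedBall.trans hvr))]
    exact hf.2 v (hδV (ball_subset_ball (min_le_right _ _) hv)) r hr.1 (hvr.trans hεD)
  have hS : sphere x R ⊆ closedBall x (ε + R) :=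
    sphere_subset_closedBall.trans (closedBall_subset_closedBall (by linarith))
  have hsplit : EqOn (fun y => f y * ⟪y, w⟫) (fun y => H y * ⟪y - x, w⟫ + f y * ⟪x, w⟫)
      (sphere x R) := fun y hy => by
    simp only [hHf (hS hy), inner_sub_left]
    ring
  rw [sphereIntegral_congr μ hR.le hsplit,
    sphereIntegral_add μ (f := fun y => H y * ⟪y - x, w⟫) (g := fun y => f y * ⟪x, w⟫) hR.le
      (by fun_prop) ((hf.1.mono (hS.trans hεD)).mul continuousOn_const),
    sphereIntegral_mul_inner_sub_eq_zero μ hH hHc (lt_min (half_pos hε) hδ) hsph w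
      ⟨hR, by linarith⟩, sphereIntegral_mul_const, hf.2 x hx R hR hRD]
  simp

theorem mul_eval (hD : IsOpen D) (hV : IsOpen V) (hf : HasVanishingSphereIntegrals μ D V f)
    {ι : Type*} (w : ι → E) (P : MvPolynomial ι ℝ) :
    HasVanishingSphereIntegrals μ D V (fun y => f y * MvPolynomial.eval (fun i => ⟪y, w i⟫) P) := by
  induction P using MvPolynomial.induction_on with
  | C a => simpa using hf.mul_const a
  | add p q hp hq => simpa [mul_add] using hp.add hq
  | mul_X p i hp => simpa [mul_assoc] using hp.mul_inner hD hV (w i)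

end HasVanishingSphereIntegrals

end InnerProductSpace

theorem stmt4_general (N : ℕ) (hN : 2 ≤ N)
    (D : Set (EuclideanSpace ℝ (Fin N))) (hDopen : IsOpen D)
    (h : EuclideanSpace ℝ (Fin N) → ℝ) (hcont : ContinuousOn h D)
    (V : Set (EuclideanSpace ℝ (Fin N))) (hVopen : IsOpen V)
    (hmean : ∀ x ∈ V, ∀ R : ℝ, 0 < R → Metric.closedBall x R ⊆ D →
      (∫ ξ : Metric.sphere (0 : EuclideanSpace ℝ (Fin N)) 1,
        h (x + R • (ξ : EuclideanSpace ℝ (Fin N)))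
        ∂(volume : Measure (EuclideanSpace ℝ (Fin N))).toSphere) = 0) :
    ∀ P : MvPolynomial (Fin N) ℝ, ∀ x ∈ V, ∀ R : ℝ, 0 < R → Metric.closedBall x R ⊆ D →
      (∫ ξ : Metric.sphere (0 : EuclideanSpace ℝ (Fin N)) 1,
        h (x + R • (ξ : EuclideanSpace ℝ (Fin N))) *
          MvPolynomial.eval (fun i => (x + R • (ξ : EuclideanSpace ℝ (Fin N))) i) P
        ∂(volume : Measure (EuclideanSpace ℝ (Fin N))).toSphere) = 0 := by
  have : Nonempty (Fin N) := ⟨⟨0, by omega⟩⟩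
  intro P x hx R hR hRD
  have hvan : HasVanishingSphereIntegrals volume D V h := ⟨hcont, hmean⟩
  have hP := (hvan.mul_eval hDopen hVopen (fun i => EuclideanSpace.single i 1) P).2 x hx R hR hRD
  simpa [sphereIntegral, EuclideanSpace.inner_single_right] using hP

/-- Inductive step in Zalcman's argument: if `h` has vanishing spherical means
around all points of a neighborhood `V`, then so does `h · P` for every
polynomial `P` on `ℝ^N`. -/
theorem stmt4 (N : ℕ) (hN : 2 ≤ N)
    (D : Set (EuclideanSpace ℝ (Fin N))) (hDopen : IsOpen D)
    (h : EuclideanSpace ℝ (Fin N) → ℝ) (hcont : ContinuousOn h D)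
    (x₀ : EuclideanSpace ℝ (Fin N)) (hx₀ : x₀ ∈ D)
    (V : Set (EuclideanSpace ℝ (Fin N))) (hVopen : IsOpen V) (hx₀V : x₀ ∈ V) (hVD : V ⊆ D)
    (hmean : ∀ x ∈ V, ∀ R : ℝ, 0 < R → Metric.closedBall x R ⊆ D →
      (∫ ξ : Metric.sphere (0 : EuclideanSpace ℝ (Fin N)) 1,
        h (x + R • (ξ : EuclideanSpace ℝ (Fin N)))
        ∂(volume : Measure (EuclideanSpace ℝ (Fin N))).toSphere) = 0) :
    ∀ P : MvPolynomial (Fin N) ℝ, ∀ x ∈ V, ∀ R : ℝ, 0 < R → Metric.closedBall x R ⊆ D →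
      (∫ ξ : Metric.sphere (0 : EuclideanSpace ℝ (Fin N)) 1,
        h (x + R • (ξ : EuclideanSpace ℝ (Fin N))) *
          MvPolynomial.eval (fun i => (x + R • (ξ : EuclideanSpace ℝ (Fin N))) i) P
        ∂(volume : Measure (EuclideanSpace ℝ (Fin N))).toSphere) = 0 :=
  stmt4_general N hN D hDopen h hcont V hVopen hmean
end

section
/- For each N ≥ 1 there is a constant C_N > 0 such that for all r ∈ ℝ and all λ ∈ ℂ, |G_N(rλ)| ≤ C_N e^{|r| |Im λ|}, where G_N(s) = 1 + Σ_{m=1}^∞ (-1)^m s^{2m} / (2^m m! ∏_{k=1}^m (N + 2(k-1))). -/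
set_option autoImplicit false

/-- The Frobenius power-series solution `G_N`, as an entire function of a
complex variable. -/
noncomputable def Gc (N : ℕ) (s : ℂ) : ℂ :=
  ∑' m : ℕ, ((-1) ^ m * s ^ (2 * m)) /
    ((2 : ℂ) ^ m * (Nat.factorial m) * ∏ k ∈ Finset.range m, ((N : ℂ) + 2 * k))

/-!
The bound holds with `C_N = 1`. For `N = 1` the series is that of `cos`, and
`‖cos z‖ ≤ e^{|Im z|}`. For `N = n + 2` one has Poisson's integral
`∫₀^{π/2} sin^n θ cos (s cos θ) dθ = W_n G_N(s)`, `W_n = ∫₀^{π/2} sin^n θ dθ > 0`: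
expanding the cosine and integrating termwise produces the moments
`∫₀^{π/2} sin^n θ cos^{2m} θ dθ`, and integration by parts shows that these are `(2m)! W_n`
divided by the `m`-th denominator of `G_N`. Since `|Im (s cos θ)| ≤ |Im s|`, the integrand is
bounded by `sin^n θ e^{|Im s|}`.
-/

open Finset Real intervalIntegral

def gcDenom (N m : ℕ) : ℕ := 2 ^ m * m.factorial * ∏ k ∈ range m, (N + 2 * k)

lemma gcDenom_succ (N m : ℕ) :
    gcDenom N (m + 1) = gcDenom N m * (2 * (m + 1) * (N + 2 * m)) := by
  simp only [gcDenom, pow_succ, Nat.factorial_succ, prod_range_succ]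
  ring

lemma gcDenom_pos {N : ℕ} (hN : 0 < N) (m : ℕ) : 0 < gcDenom N m := by
  unfold gcDenom
  have := prod_pos fun k (_ : k ∈ range m) => (by omega : 0 < N + 2 * k)
  positivity

lemma gcDenom_one (m : ℕ) : gcDenom 1 m = (2 * m).factorial := by
  induction m with
  | zero => rfl
  | succ m ih =>
    rw [gcDenom_succ, ih, show 2 * (m + 1) = 2 * m + 1 + 1 by ring, Nat.factorial_succ,
      Nat.factorial_succ]
    ring

lemma Gc_eq_tsum (N : ℕ) (s : ℂ) :
    Gc N s = ∑' m : ℕ, (-1) ^ m * s ^ (2 * m) / (gcDenom N m : ℂ) := by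
  simp [Gc, gcDenom]

lemma Gc_one : Gc 1 = Complex.cos := by
  ext s
  simp only [Gc_eq_tsum, gcDenom_one, Complex.cos_eq_tsum]

lemma Complex.norm_cos_le_exp_abs_im (z : ℂ) : ‖Complex.cos z‖ ≤ Real.exp |z.im| := by
  have h1 : ‖Complex.exp (z * Complex.I)‖ ≤ Real.exp |z.im| := by
    rw [Complex.norm_exp]; simpa using neg_le_abs z.im
  have h2 : ‖Complex.exp (-z * Complex.I)‖ ≤ Real.exp |z.im| := by
    rw [Complex.norm_exp]; simpa using le_abs_self z.im
  have h := norm_add_le (Complex.exp (z * Complex.I)) (Complex.exp (-z * Complex.I))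
  rw [← Complex.two_cos, norm_mul, Complex.norm_two] at h
  linarith

noncomputable def wallisIntegral (n j : ℕ) : ℝ :=
  ∫ θ in (0)..(π / 2), sin θ ^ n * cos θ ^ j

lemma wallisIntegral_pos (n j : ℕ) : 0 < wallisIntegral n j := by
  refine intervalIntegral_pos_of_pos_on (Continuous.intervalIntegrable (by fun_prop) _ _)
    (fun θ hθ => ?_) (by positivity)
  have hsin : 0 < sin θ := sin_pos_of_pos_of_lt_pi hθ.1 (by linarith [hθ.2, pi_pos])
  have hcos : 0 < cos θ := cos_pos_of_mem_Ioo ⟨by linarith [hθ.1, pi_pos], hθ.2⟩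
  positivity

-- Integrate the derivative of `cos θ ^ (j + 1) * sin θ ^ (n + 1)`, which vanishes at both ends.
lemma wallisIntegral_add_two (n j : ℕ) :
    (n + j + 2 : ℝ) * wallisIntegral n (j + 2) = (j + 1) * wallisIntegral n j := by
  have hderiv : ∀ θ : ℝ, HasDerivAt (fun θ => cos θ ^ (j + 1) * sin θ ^ (n + 1))
      ((n + j + 2 : ℝ) * (sin θ ^ n * cos θ ^ (j + 2)) - (j + 1) * (sin θ ^ n * cos θ ^ j))
      θ := by
    intro θ
    refine (((hasDerivAt_cos θ).fun_pow (j + 1)).fun_mul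
      ((hasDerivAt_sin θ).fun_pow (n + 1))).congr_deriv ?_
    push_cast
    linear_combination -(j + 1 : ℝ) * sin θ ^ n * cos θ ^ j * Real.sin_sq_add_cos_sq θ
  have h := integral_eq_sub_of_hasDerivAt (fun θ _ => hderiv θ) (a := 0) (b := π / 2)
    (by apply Continuous.intervalIntegrable; fun_prop)
  rw [integral_sub (by apply Continuous.intervalIntegrable; fun_prop)
    (by apply Continuous.intervalIntegrable; fun_prop), integral_const_mul,
    integral_const_mul] at h
  simp only [cos_pi_div_two, sin_zero, zero_pow (Nat.succ_ne_zero _), zero_mul, mul_zero,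
    sub_zero] at h
  unfold wallisIntegral
  linarith

lemma wallisIntegral_two_mul_mul_gcDenom (n m : ℕ) :
    wallisIntegral n (2 * m) * gcDenom (n + 2) m = (2 * m).factorial * wallisIntegral n 0 := by
  induction m with
  | zero => simp [gcDenom]
  | succ m ih =>
    have hrec := wallisIntegral_add_two n (2 * m)
    rw [show 2 * (m + 1) = 2 * m + 2 by ring, gcDenom_succ, Nat.factorial_succ, Nat.factorial_succ]
    push_cast at ih hrec ⊢
    linear_combination
      (2 * (m + 1) : ℝ) * gcDenom (n + 2) m * hrec + (2 * m + 1) * (2 * m + 2) * ih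

lemma hasSum_integral_sin_pow_mul_cos (n : ℕ) (s : ℂ) :
    HasSum
      (fun m : ℕ => (-1) ^ m * s ^ (2 * m) / (2 * m).factorial * (wallisIntegral n (2 * m) : ℂ))
      (∫ θ in (0)..(π / 2), (sin θ : ℂ) ^ n * Complex.cos (s * cos θ)) := by
  set c : ℕ → ℂ := fun m => (-1) ^ m * s ^ (2 * m) / (2 * m).factorial
  have hc : ∀ m, ‖c m‖ = ‖s‖ ^ (2 * m) / (2 * m).factorial := fun m => by simp [c]
  have hterm : ∀ m, c m * (wallisIntegral n (2 * m) : ℂ) =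
      ∫ θ in (0)..(π / 2), c m * ((sin θ ^ n * cos θ ^ (2 * m) : ℝ) : ℂ) := fun m => by
    rw [integral_const_mul, intervalIntegral.integral_ofReal, wallisIntegral]
  change HasSum (fun m => c m * (wallisIntegral n (2 * m) : ℂ)) _
  simp only [hterm]
  refine hasSum_integral_of_dominated_convergence (fun m _ => ‖c m‖)
    (fun m => (by fun_prop : Continuous _).aestronglyMeasurable) (fun m => ?_)
    (.of_forall fun θ _ => ?_) intervalIntegrable_const (.of_forall fun θ _ => ?_)
  · refine .of_forall fun θ _ => ?_
    rw [norm_mul, Complex.norm_real, norm_mul, norm_pow, norm_pow]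
    exact mul_le_of_le_one_right (norm_nonneg _) (mul_le_one₀
      (pow_le_one₀ (norm_nonneg _) (abs_sin_le_one θ)) (by positivity)
      (pow_le_one₀ (norm_nonneg _) (abs_cos_le_one θ)))
  · simp only [hc]
    exact (Real.summable_pow_div_factorial ‖s‖).comp_injective
      (fun a b hab => by simpa using hab)
  · refine ((Complex.hasSum_cos (s * cos θ)).mul_left ((sin θ : ℂ) ^ n)).congr_fun fun m => ?_
    push_cast
    ring

lemma integral_sin_pow_mul_cos_eq (n : ℕ) (s : ℂ) :
    ∫ θ in (0)..(π / 2), (sin θ : ℂ) ^ n * Complex.cos (s * cos θ) =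
      wallisIntegral n 0 * Gc (n + 2) s := by
  rw [← (hasSum_integral_sin_pow_mul_cos n s).tsum_eq, Gc_eq_tsum, ← tsum_mul_left]
  refine tsum_congr fun m => ?_
  have hW : (wallisIntegral n (2 * m) : ℂ) * gcDenom (n + 2) m =
      (2 * m).factorial * wallisIntegral n 0 := by
    exact_mod_cast wallisIntegral_two_mul_mul_gcDenom n m
  have hD : (gcDenom (n + 2) m : ℂ) ≠ 0 := by exact_mod_cast (gcDenom_pos (by omega) m).ne'
  have hF : ((2 * m).factorial : ℂ) ≠ 0 := by exact_mod_cast (2 * m).factorial_ne_zero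
  rw [div_mul_eq_mul_div, mul_div_assoc', div_eq_div_iff hF hD]
  linear_combination (-1) ^ m * s ^ (2 * m) * hW

lemma norm_Gc_add_two_le (n : ℕ) (s : ℂ) : ‖Gc (n + 2) s‖ ≤ exp |s.im| := by
  have hpointwise : ∀ θ ∈ Set.Ioc 0 (π / 2),
      ‖(sin θ : ℂ) ^ n * Complex.cos (s * cos θ)‖ ≤ sin θ ^ n * exp |s.im| := by
    intro θ hθ
    have hsin : 0 ≤ sin θ := sin_nonneg_of_nonneg_of_le_pi hθ.1.le (by linarith [hθ.2, pi_pos])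
    have him : |(s * cos θ).im| ≤ |s.im| := by
      rw [Complex.im_mul_ofReal, abs_mul]
      exact mul_le_of_le_one_right (abs_nonneg _) (abs_cos_le_one θ)
    rw [norm_mul, norm_pow, Complex.norm_real, norm_of_nonneg hsin]
    exact mul_le_mul_of_nonneg_left ((Complex.norm_cos_le_exp_abs_im _).trans (exp_le_exp.2 him))
      (by positivity)
  have h := norm_integral_le_of_norm_le (μ := MeasureTheory.volume) (by positivity)
    (MeasureTheory.ae_of_all _ hpointwise)
    (Continuous.intervalIntegrable (by fun_prop) _ _)
  rw [integral_sin_pow_mul_cos_eq, intervalIntegral.integral_mul_const, norm_mul,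
    Complex.norm_real, norm_of_nonneg (wallisIntegral_pos n 0).le] at h
  rw [show (∫ θ in (0)..(π / 2), sin θ ^ n) = wallisIntegral n 0 by simp [wallisIntegral]] at h
  exact le_of_mul_le_mul_left h (wallisIntegral_pos n 0)

lemma norm_Gc_le {N : ℕ} (hN : 1 ≤ N) (s : ℂ) : ‖Gc N s‖ ≤ exp |s.im| := by
  obtain rfl | ⟨n, rfl⟩ : N = 1 ∨ ∃ n, N = n + 2 := by
    rcases N with _ | _ | n <;> simp_all
  · exact Gc_one ▸ Complex.norm_cos_le_exp_abs_im s
  · exact norm_Gc_add_two_le n s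

/-- Exponential bound: `|G_N(rλ)| ≤ C_N e^{|r| |Im λ|}` for all real `r` and
complex `λ`. -/
theorem stmt9 (N : ℕ) (hN : 1 ≤ N) :
    ∃ C : ℝ, 0 < C ∧ ∀ (r : ℝ) (lam : ℂ),
      ‖Gc N (r * lam)‖ ≤ C * Real.exp (|r| * |lam.im|) := by
  refine ⟨1, one_pos, fun r lam => ?_⟩
  simpa [Complex.im_ofReal_mul, abs_mul] using norm_Gc_le hN (r * lam)
end

section
/- For r > 0, the function ξ ↦ √2 / √(π(r² - ξ²)) on (-r, r) (extended by 0 outside) is integrable on ℝ, and its inverse Fourier transform is the Bessel function λ ↦ J₀(rλ) (up to the normalization of the Fourier transform), so that the Fourier transform of λ ↦ J₀(rλ) is a function supported in [-r, r]. -/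
/-! The substitution `ξ = r sin θ` maps `(-π/2, π/2)` bijectively onto `(-r, r)`, with
`dξ = r cos θ dθ = √(r² - ξ²) dθ`. It turns the Fourier integral of `1/√(r² - ξ²)` over
`(-r, r)` into `∫_{-π/2}^{π/2} cos(rλ sin θ) dθ`, which is `π J₀(rλ)` because
`θ ↦ cos(t sin θ)` is `π`-periodic. -/

set_option autoImplicit false

open MeasureTheory Real

noncomputable def besselJ0 (t : ℝ) : ℝ :=
  (1 / π) * ∫ θ in (0:ℝ)..π, Real.cos (t * Real.sin θ)

open Set

theorem image_sin_Ioo : sin '' Ioo (-(π / 2)) (π / 2) = Ioo (-1) 1 := by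
  ext x
  constructor
  · rintro ⟨θ, ⟨hθ₁, hθ₂⟩, rfl⟩
    have h := (arcsin_sin hθ₁.le hθ₂.le).symm
    exact ⟨neg_pi_div_two_lt_arcsin.1 (h ▸ hθ₁), arcsin_lt_pi_div_two.1 (h ▸ hθ₂)⟩
  · rintro ⟨hx₁, hx₂⟩
    exact ⟨arcsin x, ⟨neg_pi_div_two_lt_arcsin.2 hx₁, arcsin_lt_pi_div_two.2 hx₂⟩,
      sin_arcsin hx₁.le hx₂.le⟩

theorem image_mul_sin_Ioo {r : ℝ} (hr : 0 < r) :
    (fun θ => r * sin θ) '' Ioo (-(π / 2)) (π / 2) = Ioo (-r) r := by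
  rw [show (fun θ => r * sin θ) = (r * ·) ∘ sin from rfl, image_comp, image_sin_Ioo,
    image_mul_left_Ioo hr, mul_neg_one, mul_one]

theorem injOn_mul_sin_Ioo {r : ℝ} (hr : r ≠ 0) :
    InjOn (fun θ => r * sin θ) (Ioo (-(π / 2)) (π / 2)) := fun _ ha _ hb h =>
  injOn_sin (Ioo_subset_Icc_self ha) (Ioo_subset_Icc_self hb) (mul_left_cancel₀ hr h)

theorem sqrt_sq_sub_sq_mul_sin {r θ : ℝ} (hr : 0 ≤ r) (hθ : 0 ≤ cos θ) :
    √(r ^ 2 - (r * sin θ) ^ 2) = r * cos θ := by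
  have hpyth : r ^ 2 - (r * sin θ) ^ 2 = (r * cos θ) ^ 2 := by
    linear_combination -r ^ 2 * cos_sq_add_sin_sq θ
  rw [hpyth, sqrt_sq (mul_nonneg hr hθ)]

theorem hasDerivWithinAt_mul_sin (r : ℝ) (s : Set ℝ) (θ : ℝ) :
    HasDerivWithinAt (fun θ => r * sin θ) (r * cos θ) s θ :=
  ((hasDerivAt_sin θ).const_mul r).hasDerivWithinAt

theorem abs_mul_cos_smul_div_sqrt {r θ : ℝ} (hr : 0 < r) (hθ : θ ∈ Ioo (-(π / 2)) (π / 2))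
    (y : ℝ) : |r * cos θ| • (y / √(r ^ 2 - (r * sin θ) ^ 2)) = y := by
  have hcos : 0 < cos θ := cos_pos_of_mem_Ioo hθ
  have hrcos : 0 < r * cos θ := mul_pos hr hcos
  rw [sqrt_sq_sub_sq_mul_sin hr.le hcos.le, abs_of_pos hrcos, smul_eq_mul,
    mul_div_cancel₀ _ hrcos.ne']

theorem integrableOn_div_sqrt_sq_sub_sq_iff {r : ℝ} (hr : 0 < r) (g : ℝ → ℝ) :
    IntegrableOn (fun ξ => g ξ / √(r ^ 2 - ξ ^ 2)) (Ioo (-r) r) ↔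
      IntegrableOn (fun θ => g (r * sin θ)) (Ioo (-(π / 2)) (π / 2)) := by
  rw [← image_mul_sin_Ioo hr, integrableOn_image_iff_integrableOn_abs_deriv_smul
    measurableSet_Ioo (fun θ _ => hasDerivWithinAt_mul_sin r _ θ) (injOn_mul_sin_Ioo hr.ne')]
  exact integrableOn_congr_fun (fun θ hθ => abs_mul_cos_smul_div_sqrt hr hθ _) measurableSet_Ioo

theorem integral_div_sqrt_sq_sub_sq {r : ℝ} (hr : 0 < r) (g : ℝ → ℝ) :
    ∫ ξ in Ioo (-r) r, g ξ / √(r ^ 2 - ξ ^ 2) =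
      ∫ θ in Ioo (-(π / 2)) (π / 2), g (r * sin θ) := by
  rw [← image_mul_sin_Ioo hr, integral_image_eq_integral_abs_deriv_smul
    measurableSet_Ioo (fun θ _ => hasDerivWithinAt_mul_sin r _ θ) (injOn_mul_sin_Ioo hr.ne')]
  exact setIntegral_congr_fun measurableSet_Ioo fun θ hθ => abs_mul_cos_smul_div_sqrt hr hθ _

theorem integral_cos_mul_sin_eq_pi_mul_besselJ0 (t : ℝ) :
    ∫ θ in -(π / 2)..π / 2, cos (t * sin θ) = π * besselJ0 t := by
  have hper : Function.Periodic (fun θ => cos (t * sin θ)) π := fun θ => by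
    simp only [sin_add_pi, mul_neg, cos_neg]
  have hshift := hper.intervalIntegral_add_eq (-(π / 2)) 0
  rw [show -(π / 2) + π = π / 2 by ring, zero_add] at hshift
  rw [hshift, besselJ0, ← mul_assoc, mul_one_div_cancel pi_ne_zero, one_mul]

/-- The function `ξ ↦ √2/√(π(r²-ξ²))` on `(-r,r)` (extended by `0`) is
integrable on `ℝ`, and its inverse Fourier transform is, up to a nonzero
normalization constant, the Bessel function `λ ↦ J₀(rλ)`; hence the Fourier
transform of `λ ↦ J₀(rλ)` is a function supported in `[-r, r]`. -/
theorem stmt13 (r : ℝ) (hr : 0 < r) :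
    Integrable ((Set.Ioo (-r) r).indicator
      (fun ξ : ℝ => Real.sqrt 2 / Real.sqrt (π * (r ^ 2 - ξ ^ 2)))) ∧
    ∃ c : ℝ, c ≠ 0 ∧ ∀ lam : ℝ,
      (∫ ξ in Set.Ioo (-r) r,
        (Real.sqrt 2 / Real.sqrt (π * (r ^ 2 - ξ ^ 2))) * Real.cos (ξ * lam)) =
      c * besselJ0 (r * lam) := by
  have hsplit (ξ : ℝ) : √2 / √(π * (r ^ 2 - ξ ^ 2)) = √2 / √π / √(r ^ 2 - ξ ^ 2) := by
    rw [sqrt_mul pi_pos.le, div_div]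
  simp_rw [hsplit]
  refine ⟨(integrable_indicator_iff measurableSet_Ioo).2 <|
    (integrableOn_div_sqrt_sq_sub_sq_iff hr _).2 (integrableOn_const measure_Ioo_lt_top.ne), ?_⟩
  refine ⟨√2 * √π, by positivity, fun lam => ?_⟩
  simp_rw [div_mul_eq_mul_div _ (√(r ^ 2 - _))]
  rw [integral_div_sqrt_sq_sub_sq hr, integral_const_mul, ← integral_Ioc_eq_integral_Ioo,
    ← intervalIntegral.integral_of_le (by linarith [pi_pos])]
  simp_rw [mul_right_comm r _ lam]
  rw [integral_cos_mul_sin_eq_pi_mul_besselJ0, div_mul_eq_mul_div,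
    div_eq_iff (sqrt_pos.2 pi_pos).ne']
  linear_combination -(√2 * besselJ0 (r * lam)) * mul_self_sqrt pi_pos.le
end
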